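/- arXiv:2012.12223 — 2 statements merged into one kernel-verified Lean document; each statement's English description precedes it below -/
import Mathlib

section
/- Let (X,d) be a metric space, k ≥ 0, and A ⊆ X a set with 0 < H_k(A) < ∞ (H_k the k-dimensional Hausdorff measure). Then for H_k-almost every x ∈ A one has limsup_{r→0} H^∞_k(A ∩ B_r(x)) / r^k ≥ c for some constant c > 0 depending only on k (in fact one may take c related to the normalization of H_k, e.g. c = 2^{-k} with the diameter-based definition). -/
/-!
Take `c = 1/2`. For `δ > 0` let `E` be the set of points `x` of `A` with
`H^∞_k(A ∩ B_r(x)) ≤ c r^k` for all `r < δ`. A set `t` of diameter `d < δ` through `x ∈ E` lies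
in `B_r(x)` for every `r > d`, so letting `r ↓ d` gives `H^∞_k(A ∩ t) ≤ c d^k`. For `ρ < δ`, the
`ρ`-approximation `H^ρ_k` of the Hausdorff measure is an outer measure and is dominated by
`H^∞_k` on sets of diameter `≤ ρ`, hence `H^ρ_k(E ∩ t) ≤ c diam(t)^k` for every such `t`, and
therefore `H^ρ_k(E) ≤ c H^ρ_k(E)`. As `H^ρ_k(E) ≤ H_k(A) < ∞`, this forces `H^ρ_k(E) = 0`, so
`H_k(E) = 0`. The points where the upper density is below `c` lie in countably many such `E`;
the condition defining `E` is closed in `x`, which is what lets `H_k` restricted to the possibly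
non-measurable `A` be evaluated on it.
-/

open MeasureTheory
open scoped ENNReal NNReal

/-- The `k`-dimensional Hausdorff pre-measure: infimum of `∑ diam(S i)^k` over
countable covers of `A`, with no diameter restriction. -/
noncomputable def preHaus {X : Type*} [EMetricSpace X] (k : ℝ) (A : Set X) : ℝ≥0∞ :=
  ⨅ (t : ℕ → Set X) (_ : A ⊆ ⋃ n, t n), ∑' n, EMetric.diam (t n) ^ k

open Filter Metric Set Topology

theorem le_mul_ofReal_rpow_of_forall_Ioo {F c : ℝ≥0∞} (hc : c ≠ ⊤) {k a δ : ℝ} (haδ : a < δ)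
    (h : ∀ r, a < r → r < δ → F ≤ c * ENNReal.ofReal r ^ k) :
    F ≤ c * ENNReal.ofReal a ^ k := by
  have hlim : Tendsto (fun r => c * ENNReal.ofReal r ^ k) (𝓝[>] a)
      (𝓝 (c * ENNReal.ofReal a ^ k)) :=
    (ENNReal.Tendsto.const_mul
      ((ENNReal.continuous_rpow_const.comp ENNReal.continuous_ofReal).tendsto a)
      (Or.inr hc)).mono_left nhdsWithin_le_nhds
  refine ge_of_tendsto hlim ?_
  filter_upwards [Ioo_mem_nhdsGT haδ] with r hr using h r hr.1 hr.2

namespace MeasureTheory.OuterMeasure.mkMetric'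

variable {X : Type*} [EMetricSpace X]

theorem pre_smul (m : Set X → ℝ≥0∞) (r : ℝ≥0∞) {c : ℝ≥0∞} (hc : c ≠ ⊤) (hc₀ : c ≠ 0) :
    pre (c • m) r = c • pre m r := by
  rw [pre, pre, smul_boundedBy hc, ennreal_smul_extend _ hc₀]
  rfl

theorem pre_eq_zero_of_pre_inter_le {m : Set X → ℝ≥0∞} {r c : ℝ≥0∞} {E : Set X}
    (hc₀ : c ≠ 0) (hc₁ : c < 1) (hE : pre m r E ≠ ⊤)
    (h : ∀ s, ediam s ≤ r → pre m r (s ∩ E) ≤ c * m s) : pre m r E = 0 := by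
  have hrestrict : restrict E (pre m r) ≤ pre (c • m) r := le_pre.2 fun s hs => by
    simpa only [restrict_apply, Pi.smul_apply, smul_eq_mul] using h s hs
  have hself : pre m r E ≤ c * pre m r E := by
    simpa [pre_smul m r hc₁.ne_top hc₀] using hrestrict E
  by_contra hne
  have hlt : c * pre m r E < 1 * pre m r E := by gcongr
  exact (one_mul (pre m r E) ▸ hlt).not_ge hself

theorem pre_le_preHaus {k : ℝ} (hk : 0 ≤ k) {r : ℝ≥0∞} {t : Set X} (ht : ediam t ≤ r) :
    pre (fun s => ediam s ^ k) r t ≤ preHaus k t := by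
  refine le_iInf₂ fun u hu => ?_
  set P := pre (fun s : Set X => ediam s ^ k) r
  calc P t ≤ P (⋃ n, u n ∩ t) := by
        rw [← iUnion_inter]; exact measure_mono (subset_inter hu subset_rfl)
    _ ≤ ∑' n, P (u n ∩ t) := measure_iUnion_le _
    _ ≤ ∑' n, ediam (u n ∩ t) ^ k :=
        ENNReal.tsum_le_tsum fun n => pre_le ((ediam_mono inter_subset_right).trans ht)
    _ ≤ ∑' n, ediam (u n) ^ k :=
        ENNReal.tsum_le_tsum fun n => ENNReal.rpow_le_rpow (ediam_mono inter_subset_left) hk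

end MeasureTheory.OuterMeasure.mkMetric'

section preHaus

variable {X : Type*}

theorem preHaus_mono [EMetricSpace X] (k : ℝ) {S T : Set X} (h : S ⊆ T) :
    preHaus k S ≤ preHaus k T :=
  le_iInf₂ fun t ht => iInf₂_le t (h.trans ht)

def lowDensitySet [MetricSpace X] (k : ℝ) (c : ℝ≥0∞) (A : Set X) (δ : ℝ) : Set X :=
  {x | ∀ r, 0 < r → r < δ → preHaus k (A ∩ ball x r) ≤ c * ENNReal.ofReal r ^ k}

variable [MetricSpace X] {k : ℝ} {c : ℝ≥0∞} {A : Set X} {δ : ℝ}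

theorem isClosed_lowDensitySet (hc : c ≠ ⊤) : IsClosed (lowDensitySet k c A δ) := by
  refine isClosed_of_closure_subset fun x hx r hr₀ hrδ => ?_
  refine le_mul_ofReal_rpow_of_forall_Ioo hc hrδ fun r' hrr' hr'δ => ?_
  obtain ⟨y, hy, hxy⟩ := Metric.mem_closure_iff.1 hx (r' - r) (by linarith)
  calc preHaus k (A ∩ ball x r) ≤ preHaus k (A ∩ ball y r') :=
        preHaus_mono k (inter_subset_inter_right A (ball_subset_ball' (by linarith)))
    _ ≤ c * ENNReal.ofReal r' ^ k := hy r' (hr₀.trans hrr') hr'δ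

theorem preHaus_inter_le_of_mem_lowDensitySet (hc : c ≠ ⊤) {x : X} {t : Set X}
    (hx : x ∈ lowDensitySet k c A δ) (hxt : x ∈ t) (ht : ediam t < ENNReal.ofReal δ) :
    preHaus k (A ∩ t) ≤ c * ediam t ^ k := by
  rw [← ENNReal.ofReal_toReal ht.ne_top]
  refine le_mul_ofReal_rpow_of_forall_Ioo hc (ENNReal.toReal_lt_of_lt_ofReal ht)
    fun r hr hrδ => ?_
  have hsub : t ⊆ ball x r := fun y hy => by
    rw [mem_ball, dist_edist]
    exact (ENNReal.toReal_mono ht.ne_top (edist_le_ediam_of_mem hy hxt)).trans_lt hr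
  exact (preHaus_mono k (inter_subset_inter_right A hsub)).trans
    (hx r (ENNReal.toReal_nonneg.trans_lt hr) hrδ)

end preHaus

section density

open MeasureTheory.OuterMeasure.mkMetric'

variable {X : Type*} [MetricSpace X] {k : ℝ} {c : ℝ≥0∞} {A : Set X}

theorem hausdorffMeasure_lowDensitySet_inter_eq_zero [MeasurableSpace X] [BorelSpace X]
    (hk : 0 ≤ k) (hc₀ : c ≠ 0) (hc₁ : c < 1) (hA : μH[k] A ≠ ⊤) {δ : ℝ} (hδ : 0 < δ) :
    μH[k] (lowDensitySet k c A δ ∩ A) = 0 := by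
  set E := lowDensitySet k c A δ ∩ A
  set m : Set X → ℝ≥0∞ := fun s => ediam s ^ k
  have hμ : μH[k] E = OuterMeasure.mkMetric' m E := by
    rw [Measure.hausdorffMeasure, ← OuterMeasure.coe_mkMetric]
    rfl
  have hpre_le : ∀ r > 0, pre m r E ≤ μH[k] E := fun r hr => by
    rw [hμ]
    exact le_iSup₂ (f := fun r (_ : 0 < r) => pre m r) r hr E
  have hsmall : ∀ᶠ r in 𝓝[>] 0, pre m r E = 0 := by
    filter_upwards [Ioo_mem_nhdsGT (ENNReal.ofReal_pos.2 hδ)] with r hr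
    have hfin : pre m r E ≠ ⊤ :=
      ne_top_of_le_ne_top hA ((hpre_le r hr.1).trans (measure_mono inter_subset_right))
    refine pre_eq_zero_of_pre_inter_le hc₀ hc₁ hfin fun s hs => ?_
    rcases (s ∩ E).eq_empty_or_nonempty with h | ⟨x, hxs, hxδ, -⟩
    · simp [h]
    calc pre m r (s ∩ E) ≤ pre m r (A ∩ s) := measure_mono fun y hy => ⟨hy.2.2, hy.1⟩
      _ ≤ preHaus k (A ∩ s) := pre_le_preHaus hk ((ediam_mono inter_subset_right).trans hs)
      _ ≤ c * m s :=
        preHaus_inter_le_of_mem_lowDensitySet hc₁.ne_top hxδ hxs (hs.trans_lt hr.2)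
  rw [hμ]
  exact tendsto_nhds_unique (tendsto_pre m E)
    (tendsto_const_nhds.congr' (hsmall.mono fun r h => h.symm))

theorem setOf_limsup_lt_subset_iUnion_lowDensitySet (c : ℝ≥0∞) (A : Set X) :
    {x | limsup (fun r : ℝ => preHaus k (A ∩ ball x r) / ENNReal.ofReal r ^ k) (𝓝[>] 0) < c}
      ⊆ ⋃ n : ℕ, lowDensitySet k c A (1 / (n + 1)) := by
  intro x (hx : _ < c)
  obtain ⟨u, hu, hsub⟩ := mem_nhdsGT_iff_exists_Ioo_subset.1 (eventually_lt_of_limsup_lt hx)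
  obtain ⟨n, hn⟩ := exists_nat_one_div_lt hu.out
  refine mem_iUnion.2 ⟨n, fun r hr₀ hrn => ?_⟩
  have hr : ENNReal.ofReal r ≠ 0 := (ENNReal.ofReal_pos.2 hr₀).ne'
  refine ((ENNReal.div_lt_iff (Or.inl ?_) (Or.inl ?_)).1 (hsub ⟨hr₀, hrn.trans hn⟩)).le
  · exact (ENNReal.rpow_pos (pos_iff_ne_zero.2 hr) ENNReal.ofReal_ne_top).ne'
  · exact ENNReal.rpow_ne_top_of_ne_zero hr ENNReal.ofReal_ne_top

end density

/-- For a set `A` with `0 < H_k(A) < ∞`, at `H_k`-a.e. `x ∈ A` the upper density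
`limsup_{r→0} H^∞_k(A ∩ B_r(x)) / r^k` is at least a positive constant `c`
depending only on `k`. -/
theorem stmt1 (k : ℝ) (hk : 0 ≤ k) :
    ∃ c : ℝ≥0∞, 0 < c ∧
      ∀ (X : Type) [MetricSpace X] [MeasurableSpace X] [BorelSpace X] (A : Set X),
        0 < μH[k] A → μH[k] A < ⊤ →
        ∀ᵐ x ∂(μH[k].restrict A),
          c ≤ Filter.limsup
                (fun r : ℝ => preHaus k (A ∩ Metric.ball x r) / ENNReal.ofReal r ^ k)
                (nhdsWithin 0 (Set.Ioi 0)) := by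
  refine ⟨2⁻¹, by simp, fun X _ _ _ A _ hA => ?_⟩
  rw [ae_iff]
  simp only [not_le]
  refine measure_mono_null (setOf_limsup_lt_subset_iUnion_lowDensitySet _ A)
    (measure_iUnion_null fun n => ?_)
  rw [Measure.restrict_apply (isClosed_lowDensitySet (by simp)).measurableSet]
  exact hausdorffMeasure_lowDensitySet_inter_eq_zero hk (by simp)
    (ENNReal.inv_lt_one.2 ENNReal.one_lt_two) hA.ne (by positivity)
end

section
/- For any two distinct points x, y ∈ ℝ^n (n ≥ 2), let m = (x+y)/2, let B_r be the (n-1)-dimensional ball of radius r ∈ (0, |x−y|] centered at m in the hyperplane through m orthogonal to the segment [x,y], and for z ∈ B_r let γ_z be the concatenation of the segments [x,z] and [z,y]. Then there is a constant C₀ depending only on n (not on x, y, r) such that every γ_z satisfies the quasi-convexity bound: the length of γ_z restricted between parameters s and t is at most C₀ times the distance between γ_z(s) and γ_z(t). -/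
open scoped RealInnerProductSpace

/-- The unit-speed curve from `x` to `y` through `z`: follow the segment `[x,z]`
(arc-length parameterized), then the segment `[z,y]`. -/
noncomputable def gammaZ {n : ℕ} (x y z : EuclideanSpace ℝ (Fin n)) (t : ℝ) :
    EuclideanSpace ℝ (Fin n) :=
  if t ≤ dist x z then x + (t / dist x z) • (z - x)
  else z + ((t - dist x z) / dist z y) • (y - z)

/-!
Since `z` lies on the perpendicular bisector of `[x, y]`, the curve `γ_z` is a hinge: two legs
of the same length `L` leaving the vertex `z` with unit directions `-u` and `v`. The bound
`|z - m| ≤ |x - y|` keeps the hinge from closing up: it gives `⟪u, v⟫ ≥ -3/5`. On a single leg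
the chord equals the arc; for points `z - a u` and `z + b v` on different legs,
`|a u + b v|² ≥ a² + b² - (6/5) a b ≥ (a + b)² / 5`. Hence `C₀ = 3 ≥ √5` works in every dimension.
-/

section Hinge

variable {E : Type*} [NormedAddCommGroup E] [InnerProductSpace ℝ E]

lemma neg_three_fifths_mul_norm_sq_le_inner {w h : E} (hwh : ⟪w, h⟫ = 0)
    (hw : ‖w‖ ≤ 2 * ‖h‖) : -(3 / 5) * ‖w + h‖ ^ 2 ≤ ⟪w + h, h - w⟫ := by
  have hexpand : ⟪w + h, h - w⟫ = ‖h‖ ^ 2 - ‖w‖ ^ 2 := by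
    simp only [inner_add_left, inner_sub_right, real_inner_self_eq_norm_sq,
      real_inner_comm w h, hwh]
    ring
  rw [norm_add_sq_real, hexpand, hwh]
  nlinarith [norm_nonneg w, norm_nonneg h]

lemma neg_three_fifths_mul_norm_sq_le_inner_of_perp_midpoint {x y z : E}
    (hperp : ⟪z - midpoint ℝ x y, y - x⟫ = 0) (hz : ‖z - midpoint ℝ x y‖ ≤ ‖y - x‖) :
    -(3 / 5) * ‖z - x‖ ^ 2 ≤ ⟪z - x, y - z⟫ := by
  set m := midpoint ℝ x y
  have hmx : m - x = (2⁻¹ : ℝ) • (y - x) := by simp [m, midpoint_sub_left]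
  have hym : y - m = (2⁻¹ : ℝ) • (y - x) := by simp [m, right_sub_midpoint]
  have hzx : z - x = (z - m) + (y - m) := by rw [hym, ← hmx]; abel
  have hyz : y - z = (y - m) - (z - m) := by abel
  rw [hzx, hyz]
  refine neg_three_fifths_mul_norm_sq_le_inner ?_ ?_
  · rw [hym, real_inner_smul_right, hperp, mul_zero]
  · rw [hym, norm_smul, Real.norm_of_nonneg (by norm_num : (0 : ℝ) ≤ 2⁻¹)]
    linarith

lemma one_sub_mul_add_sq_le_two_mul_norm_smul_add_smul_sq {u v : E} {κ a b : ℝ}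
    (hu : ‖u‖ = 1) (hv : ‖v‖ = 1) (huv : -κ ≤ ⟪u, v⟫) (ha : 0 ≤ a) (hb : 0 ≤ b) :
    (1 - κ) * (a + b) ^ 2 ≤ 2 * ‖a • u + b • v‖ ^ 2 := by
  have hκ : -1 ≤ κ := by linarith [real_inner_le_one_of_norm_eq_one hu hv]
  have hnorm : ‖a • u + b • v‖ ^ 2 = a ^ 2 + 2 * (a * b) * ⟪u, v⟫ + b ^ 2 := by
    rw [norm_add_sq_real, real_inner_smul_left, real_inner_smul_right, norm_smul, norm_smul,
      hu, hv, Real.norm_of_nonneg ha, Real.norm_of_nonneg hb]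
    ring
  rw [hnorm]
  nlinarith [mul_nonneg (mul_nonneg ha hb) (neg_le_iff_add_nonneg.mp huv),
    mul_nonneg (sq_nonneg (a - b)) (neg_le_iff_add_nonneg.mp hκ)]

lemma one_sub_mul_sub_sq_le_two_mul_dist_sq {γ : ℝ → E} {z u v : E} {κ L : ℝ}
    (hu : ‖u‖ = 1) (hv : ‖v‖ = 1) (huv : -κ ≤ ⟪u, v⟫)
    (hγu : ∀ t ≤ L, γ t = z + (t - L) • u) (hγv : ∀ t, L < t → γ t = z + (t - L) • v)
    {s t : ℝ} (hst : s ≤ t) :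
    (1 - κ) * (t - s) ^ 2 ≤ 2 * dist (γ s) (γ t) ^ 2 := by
  have hκ : -1 ≤ κ := by linarith [real_inner_le_one_of_norm_eq_one hu hv]
  have dist_along {w : E} (hw : ‖w‖ = 1) (a b : ℝ) :
      dist (z + a • w) (z + b • w) = |a - b| := by
    rw [dist_add_left, dist_eq_norm, ← sub_smul, norm_smul, hw, Real.norm_eq_abs, mul_one]
  have same_leg (h : dist (γ s) (γ t) = |(s - L) - (t - L)|) :
      (1 - κ) * (t - s) ^ 2 ≤ 2 * dist (γ s) (γ t) ^ 2 := by
    rw [h, sq_abs]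
    nlinarith [sq_nonneg (t - s)]
  rcases le_or_gt t L with htL | hLt
  · exact same_leg (by rw [hγu s (hst.trans htL), hγu t htL, dist_along hu])
  rcases le_or_gt s L with hsL | hLs
  · have hchord : dist (γ s) (γ t) = ‖(L - s) • u + (t - L) • v‖ := by
      rw [hγu s hsL, hγv t hLt, dist_add_left, dist_eq_norm, ← norm_neg]
      congr 1
      module
    rw [hchord, show t - s = (L - s) + (t - L) by ring]
    exact one_sub_mul_add_sq_le_two_mul_norm_smul_add_smul_sq hu hv huv
      (sub_nonneg.mpr hsL) (sub_nonneg.mpr hLt.le)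
  · exact same_leg (by rw [hγv s hLs, hγv t hLt, dist_along hv])

end Hinge

section GammaZ

variable {n : ℕ}

lemma gammaZ_of_le {x y z : EuclideanSpace ℝ (Fin n)} {t : ℝ} (ht : t ≤ dist x z) :
    gammaZ x y z t = z + (t - dist x z) • (dist x z)⁻¹ • (z - x) := by
  rw [gammaZ, if_pos ht]
  rcases eq_or_ne x z with rfl | hxz
  · simp
  · have hL : dist x z ≠ 0 := dist_ne_zero.mpr hxz
    rw [smul_smul, sub_mul, mul_inv_cancel₀ hL, sub_smul, one_smul, div_eq_mul_inv]
    abel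

lemma gammaZ_of_lt {x y z : EuclideanSpace ℝ (Fin n)} {t : ℝ} (ht : dist x z < t) :
    gammaZ x y z t = z + (t - dist x z) • (dist z y)⁻¹ • (y - z) := by
  rw [gammaZ, if_neg (not_le.mpr ht), smul_smul, div_eq_mul_inv]

end GammaZ

theorem stmt3_general (n : ℕ) :
    ∃ C₀ : ℝ, 0 < C₀ ∧
      ∀ (x y z : EuclideanSpace ℝ (Fin n)) (r : ℝ),
        x ≠ y → 0 < r → r ≤ dist x y →
        ⟪z - midpoint ℝ x y, y - x⟫ = 0 →
        dist z (midpoint ℝ x y) ≤ r →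
        ∀ s t : ℝ, 0 ≤ s → s ≤ t → t ≤ dist x z + dist z y →
          t - s ≤ C₀ * dist (gammaZ x y z s) (gammaZ x y z t) := by
  refine ⟨3, by norm_num, ?_⟩
  intro x y z r hxy _ hrd hperp hzr s t _ hst _
  have hiso : dist z y = dist x z := by
    rw [dist_comm x z]
    exact (AffineSubspace.mem_perpBisector_iff_dist_eq.mp
      (AffineSubspace.mem_perpBisector_iff_inner_eq_zero.mpr hperp)).symm
  have hL : 0 < dist x z :=
    dist_pos.mpr fun h => hxy (by rw [h, ← dist_eq_zero, hiso, h, dist_self])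
  have hzx : ‖z - x‖ = dist x z := (dist_eq_norm' x z).symm
  have hyz : ‖y - z‖ = dist x z := by rw [← dist_eq_norm', hiso]
  have hinner := neg_three_fifths_mul_norm_sq_le_inner_of_perp_midpoint hperp
    (by rw [← dist_eq_norm, ← dist_eq_norm']; exact hzr.trans hrd)
  have hunit (w : EuclideanSpace ℝ (Fin n)) (hw : ‖w‖ = dist x z) : ‖(dist x z)⁻¹ • w‖ = 1 := by
    rw [norm_smul, hw, norm_inv, Real.norm_of_nonneg hL.le, inv_mul_cancel₀ hL.ne']
  have hangle : -(3 / 5 : ℝ) ≤ ⟪(dist x z)⁻¹ • (z - x), (dist x z)⁻¹ • (y - z)⟫ := by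
    rw [real_inner_smul_left, real_inner_smul_right, ← mul_assoc, ← mul_inv, ← sq,
      ← div_eq_inv_mul, le_div_iff₀ (by positivity), ← hzx]
    exact hinner
  have hbound := one_sub_mul_sub_sq_le_two_mul_dist_sq (γ := gammaZ x y z)
    (hunit _ hzx) (hunit _ hyz) hangle (fun t ht => gammaZ_of_le ht)
    (fun t ht => by rw [gammaZ_of_lt ht, hiso]) hst
  nlinarith [dist_nonneg (x := gammaZ x y z s) (y := gammaZ x y z t)]

/-- Uniform quasi-convexity of the curves `γ_z` of the Semmes family in `ℝ^n`:
there is `C₀ = C₀(n)` such that for all `x ≠ y`, all radii `r ∈ (0, |x-y|]`, and all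
`z` in the `(n-1)`-ball of radius `r` about the midpoint in the perpendicular bisector
hyperplane, the length of `γ_z` between parameters `s ≤ t` (which is `t - s`, by
arc-length parameterization) is at most `C₀ · dist(γ_z(s), γ_z(t))`. -/
theorem stmt3 (n : ℕ) (hn : 2 ≤ n) :
    ∃ C₀ : ℝ, 0 < C₀ ∧
      ∀ (x y z : EuclideanSpace ℝ (Fin n)) (r : ℝ),
        x ≠ y → 0 < r → r ≤ dist x y →
        ⟪z - midpoint ℝ x y, y - x⟫ = 0 →
        dist z (midpoint ℝ x y) ≤ r →
        ∀ s t : ℝ, 0 ≤ s → s ≤ t → t ≤ dist x z + dist z y →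
          t - s ≤ C₀ * dist (gammaZ x y z s) (gammaZ x y z t) :=
  stmt3_general n
end
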